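/- arXiv:1903.01437 — 2 statements merged into one kernel-verified Lean document; each statement's English description precedes it below -/
import Mathlib

section
/- Generalized Jacobi identity with m=0 for the constructed brackets: let π: V⁻ → H and β: H → V⁻ be graded linear maps with β of degree +1, H a graded commutative algebra, B := π∘β satisfying B∘π = 0, β∘B = 0, and B a derivation-failure of second order such that B(a₁⋯aₙ) + Σ_i ±a₁⋯B(a_i)⋯aₙ = Σ_{i<j} ±B(a_i a_j)a₁⋯â_i⋯â_j⋯aₙ (the n-ary second order identity with B² = 0). Then Σ_{i<j} (-1)^{ε_{ij}} β( B(π x_i · π x_j) · π x₁ ⋯ \widehat{πx_i} ⋯ \widehat{πx_j} ⋯ π xₙ ) = 0, where ε_{ij} = |x_i|(|x₁|+⋯+|x_{i-1}|) + |x_j|(|x₁|+⋯+|x_{j-1}|) - |x_i||x_j|. -/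
/-!
Apply `β` to the second order identity for the elements `π xᵢ`: the term `β (B (π x₁ ⋯ π xₙ))`
vanishes because `β ∘ B = 0`, and every term containing a factor `B (π xᵢ)` vanishes because
`B ∘ π = 0`. What is left is `β` applied to the left-hand side of the identity.
-/

/-- Sign operator: `eps n x = (-1)^n • x`. -/
noncomputable def eps {V : Type*} [AddCommGroup V] (n : ℤ) (x : V) : V :=
  ((-1 : ℤ) ^ n.natAbs) • x

/-- Ordered product of a list of elements, with unit `one`. -/
def lprod {V : Type*} (m : V → V → V) (one : V) (l : List V) : V :=
  l.foldr m one

theorem lprod_eq_zero_of_zero_mem {V : Type*} [Zero V] {m : V → V → V}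
    (zero_m : ∀ a, m 0 a = 0) (m_zero : ∀ a, m a 0 = 0) (one : V) {l : List V}
    (hl : (0 : V) ∈ l) : lprod m one l = 0 := by
  induction l with
  | nil => simp at hl
  | cons a t ih =>
    rcases List.mem_cons.mp hl with rfl | ht
    · exact zero_m _
    · exact (congrArg (m a) (ih ht)).trans (m_zero a)

@[simp]
theorem eps_zero {V : Type*} [AddCommGroup V] (n : ℤ) : eps n (0 : V) = 0 :=
  smul_zero _

theorem map_eps {V W : Type*} [AddCommGroup V] [AddCommGroup W] (f : V →+ W) (n : ℤ) (x : V) :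
    f (eps n x) = eps n (f x) :=
  map_zsmul f _ x

theorem gravity_jacobi_m_zero_general {Vneg H : Type*}
    [AddCommGroup Vneg] [AddCommGroup H]
    (homC : ℤ → Vneg → Prop) (homH : ℤ → H → Prop)
    (π : Vneg → H) (β : H → Vneg)
    (hβ_add : ∀ x y, β (x + y) = β x + β y)
    (hπ_homog : ∀ p x, homC p x → homH p (π x))
    (m : H → H → H) (one : H)
    (hml : ∀ a b c, m (a + b) c = m a c + m b c)
    (hmr : ∀ a b c, m a (b + c) = m a b + m a c)
    -- B ∘ π = 0 and β ∘ B = 0, where B := π ∘ β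
    (hBπ : ∀ x : Vneg, π (β (π x)) = 0)
    (hβB : ∀ a : H, β (π (β a)) = 0)
    -- the n-ary second order identity for B = π ∘ β
    (h2nd : ∀ (n : ℕ), 2 ≤ n → ∀ (a : Fin n → H) (d : Fin n → ℤ),
      (∀ i, homH (d i) (a i)) →
      (∑ i : Fin n, ∑ j : Fin n, if i < j then
          eps ((∑ t : Fin n, if t < i then d t else 0) * d i
              + (∑ t : Fin n, if t < j then d t else 0) * d j - d i * d j)
            (m (π (β (m (a i) (a j))))
              (lprod m one
                (((List.finRange n).filter (fun t => decide (t ≠ i ∧ t ≠ j))).map a)))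
        else 0)
      = π (β (lprod m one (List.ofFn a)))
        + ∑ i : Fin n,
            eps (∑ t : Fin n, if t < i then d t else 0)
              (lprod m one (List.ofFn (fun t => if t = i then π (β (a t)) else a t)))) :
    ∀ (n : ℕ), 2 ≤ n → ∀ (x : Fin n → Vneg) (d : Fin n → ℤ),
      (∀ i, homC (d i) (x i)) →
      (∑ i : Fin n, ∑ j : Fin n, if i < j then
          eps ((∑ t : Fin n, if t < i then d t else 0) * d i
              + (∑ t : Fin n, if t < j then d t else 0) * d j - d i * d j)
            (β (m (π (β (m (π (x i)) (π (x j)))))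
              (lprod m one
                (((List.finRange n).filter (fun t => decide (t ≠ i ∧ t ≠ j))).map
                  (fun t => π (x t))))))
        else 0)
      = 0 := by
  intro n hn x d hx
  have zero_m (c : H) : m 0 c = 0 := (AddMonoidHom.mk' (m · c) (hml · · c)).map_zero
  have m_zero (a : H) : m a 0 = 0 := (AddMonoidHom.mk' (m a) (hmr a)).map_zero
  have hB_factor (i : Fin n) :
      lprod m one (List.ofFn fun t => if t = i then π (β (π (x t))) else π (x t)) = 0 :=
    lprod_eq_zero_of_zero_mem zero_m m_zero one (List.mem_ofFn.mpr ⟨i, by simp [hBπ]⟩)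
  have key := congrArg (AddMonoidHom.mk' β hβ_add)
    (h2nd n hn (fun t => π (x t)) d fun i => hπ_homog _ _ (hx i))
  simp only [map_add, map_sum, apply_ite (AddMonoidHom.mk' β hβ_add), map_zero, map_eps,
    hB_factor] at key
  simpa only [AddMonoidHom.mk'_apply, hβB, eps_zero, Finset.sum_const_zero, add_zero] using key

/-- The key computation in the proof of the main theorem (generalized Jacobi with
`m = 0`): if `H` is a graded commutative algebra, `π : V⁻ → H` and `β : H → V⁻`
(of degree `+1`) satisfy `B ∘ π = 0` and `β ∘ B = 0` with `B := π ∘ β` a second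
order operator, then
`Σ_{i<j} (-1)^{ε_{ij}} β( B(π x_i · π x_j) · π x₁ ⋯ π̂x_i ⋯ π̂x_j ⋯ π xₙ ) = 0`. -/
theorem gravity_jacobi_m_zero {k Vneg H : Type*} [Field k] [CharZero k]
    [AddCommGroup Vneg] [AddCommGroup H] [Module k Vneg] [Module k H]
    (homC : ℤ → Vneg → Prop) (homH : ℤ → H → Prop)
    (π : Vneg → H) (β : H → Vneg)
    (hπ_add : ∀ x y, π (x + y) = π x + π y)
    (hβ_add : ∀ x y, β (x + y) = β x + β y)
    (hπ_homog : ∀ p x, homC p x → homH p (π x))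
    (hβ_homog : ∀ p y, homH p y → homC (p + 1) (β y))
    (m : H → H → H) (one : H)
    (hml : ∀ a b c, m (a + b) c = m a c + m b c)
    (hmr : ∀ a b c, m a (b + c) = m a b + m a c)
    (hassoc : ∀ a b c, m (m a b) c = m a (m b c))
    (hone_l : ∀ a, m one a = a) (hone_r : ∀ a, m a one = a)
    (hm_homog : ∀ p q a b, homH p a → homH q b → homH (p + q) (m a b))
    (hcomm : ∀ p q a b, homH p a → homH q b → m a b = eps (p * q) (m b a))
    -- B ∘ π = 0 and β ∘ B = 0, where B := π ∘ β
    (hBπ : ∀ x : Vneg, π (β (π x)) = 0)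
    (hβB : ∀ a : H, β (π (β a)) = 0)
    -- the n-ary second order identity for B = π ∘ β
    (h2nd : ∀ (n : ℕ), 2 ≤ n → ∀ (a : Fin n → H) (d : Fin n → ℤ),
      (∀ i, homH (d i) (a i)) →
      (∑ i : Fin n, ∑ j : Fin n, if i < j then
          eps ((∑ t : Fin n, if t < i then d t else 0) * d i
              + (∑ t : Fin n, if t < j then d t else 0) * d j - d i * d j)
            (m (π (β (m (a i) (a j))))
              (lprod m one
                (((List.finRange n).filter (fun t => decide (t ≠ i ∧ t ≠ j))).map a)))
        else 0)
      = π (β (lprod m one (List.ofFn a)))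
        + ∑ i : Fin n,
            eps (∑ t : Fin n, if t < i then d t else 0)
              (lprod m one (List.ofFn (fun t => if t = i then π (β (a t)) else a t)))) :
    ∀ (n : ℕ), 2 ≤ n → ∀ (x : Fin n → Vneg) (d : Fin n → ℤ),
      (∀ i, homC (d i) (x i)) →
      (∑ i : Fin n, ∑ j : Fin n, if i < j then
          eps ((∑ t : Fin n, if t < i then d t else 0) * d i
              + (∑ t : Fin n, if t < j then d t else 0) * d j - d i * d j)
            (β (m (π (β (m (π (x i)) (π (x j)))))
              (lprod m one
                (((List.finRange n).filter (fun t => decide (t ≠ i ∧ t ≠ j))).map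
                  (fun t => π (x t))))))
        else 0)
      = 0 :=
  gravity_jacobi_m_zero_general homC homH π β hβ_add hπ_homog m one hml hmr hBπ hβB h2nd
end

section
/- Lambre's theorem: let (H^•, H_•, ∪, ∩, {-,-}, B) be a differential calculus with duality, with volume form η ∈ H_n satisfying η∩1 = η, B(η) = 0, and PD: f ↦ f ∩ η an isomorphism H^i → H_{n-i}. Define Δ := PD⁻¹ ∘ B ∘ PD: H^• → H^{•-1}. Then (H^•, ∪, Δ) is a Batalin-Vilkovisky algebra whose induced bracket equals the Gerstenhaber bracket {-,-}: {f,g} = (-1)^{|f|+1}(Δ(f∪g) - Δ(f)∪g - (-1)^{|f|} f∪Δ(g)). -/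
/-- A differential calculus with duality (Tamarkin-Tsygan, Lambre): a Gerstenhaber
algebra `(H^•, ∪, {-,-})`, a graded module `H_•` via the cap product with
contraction `ι_f = f ∩ -`, an operator `B` with `B² = 0` satisfying the Cartan
compatibilities, and a volume form `η ∈ H_n` with `η ∩ 1 = η`, `Bη = 0`, such that
`PD(f) := f ∩ η` is an isomorphism `H^i ≅ H_{n-i}` (with inverse `PDinv`). -/
structure DCD (Hc Hh : Type*) [AddCommGroup Hc] [AddCommGroup Hh] where
  homc : ℤ → Hc → Prop
  homh : ℤ → Hh → Prop
  cup : Hc → Hc → Hc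
  one : Hc
  gb : Hc → Hc → Hc
  cap : Hc → Hh → Hh
  B : Hh → Hh
  n : ℤ
  vol : Hh
  cup_addl : ∀ a b c, cup (a + b) c = cup a c + cup b c
  cup_addr : ∀ a b c, cup a (b + c) = cup a b + cup a c
  cup_assoc : ∀ a b c, cup (cup a b) c = cup a (cup b c)
  cup_one : ∀ a, cup one a = a
  one_cup : ∀ a, cup a one = a
  one_homog : homc 0 one
  cup_homog : ∀ p q a b, homc p a → homc q b → homc (p + q) (cup a b)
  cup_comm : ∀ p q a b, homc p a → homc q b → cup a b = eps (p * q) (cup b a)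
  gb_homog : ∀ p q a b, homc p a → homc q b → homc (p + q - 1) (gb a b)
  gb_skew : ∀ p q a b, homc p a → homc q b →
    gb a b = - eps ((p + 1) * (q + 1)) (gb b a)
  gb_leibniz : ∀ p q r a b c, homc p a → homc q b → homc r c →
    gb a (cup b c) = cup (gb a b) c + eps ((p + 1) * q) (cup b (gb a c))
  cap_addl : ∀ a b α, cap (a + b) α = cap a α + cap b α
  cap_addr : ∀ a α β, cap a (α + β) = cap a α + cap a β
  cap_cup : ∀ a b α, cap (cup a b) α = cap a (cap b α)
  cap_one : ∀ α, cap one α = α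
  cap_homog : ∀ p q a α, homc p a → homh q α → homh (q - p) (cap a α)
  B_add : ∀ α β, B (α + β) = B α + B β
  B_homog : ∀ q α, homh q α → homh (q + 1) (B α)
  B_sq : ∀ α, B (B α) = 0
  lie_lie : ∀ p q a b α, homc p a → homc q b →
    (B (cap a (B (cap b α) - eps q (cap b (B α))))
        - eps p (cap a (B (B (cap b α) - eps q (cap b (B α))))))
      - eps ((p + 1) * (q + 1))
        (B (cap b (B (cap a α) - eps p (cap a (B α))))
          - eps q (cap b (B (B (cap a α) - eps p (cap a (B α))))))
    = B (cap (gb a b) α) - eps (p + q - 1) (cap (gb a b) (B α))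
  compat : ∀ p q a b α, homc p a → homc q b →
    eps (p + 1) (cap (gb a b) α)
      = (B (cap a (cap b α)) - eps p (cap a (B (cap b α))))
        - eps (q * (p + 1)) (cap b (B (cap a α) - eps p (cap a (B α))))
  vol_homog : homh n vol
  vol_cap_one : cap one vol = vol
  B_vol : B vol = 0
  PDinv : Hh → Hc
  pd_left : ∀ f, PDinv (cap f vol) = f
  pd_right : ∀ α, cap (PDinv α) vol = α
  PDinv_homog : ∀ q α, homh q α → homc (n - q) (PDinv α)

/-- The BV operator `Δ = PD⁻¹ ∘ B ∘ PD` of a differential calculus with duality. -/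
noncomputable def DCD.Δ {Hc Hh : Type*} [AddCommGroup Hc] [AddCommGroup Hh]
    (D : DCD Hc Hh) (f : Hc) : Hc :=
  D.PDinv (D.B (D.cap f D.vol))

section EpsLemmas

variable {V W : Type*} [AddCommGroup V] [AddCommGroup W]

lemma eps_eq (m : ℤ) (x : V) : eps m x = if Even m then x else -x := by
  rcases Int.even_or_odd m with h | h
  · have h' : Even m.natAbs := Int.natAbs_even.mpr h
    simp [eps, h'.neg_one_pow, h]
  · have h' : Odd m.natAbs := Int.natAbs_odd.mpr h
    simp [eps, h'.neg_one_pow, Int.not_even_iff_odd.mpr h]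

lemma eps_congr {m n : ℤ} (h : Even (m - n)) (x : V) : eps m x = eps n x := by
  have h2 := Int.even_sub.mp h
  rw [eps_eq, eps_eq]
  by_cases hm : Even m
  · rw [if_pos hm, if_pos (h2.mp hm)]
  · rw [if_neg hm, if_neg (fun hn => hm (h2.mpr hn))]

lemma eps_zero_s12 (x : V) : eps 0 x = x := by simp [eps]

lemma eps_eps (m n : ℤ) (x : V) : eps m (eps n x) = eps (m + n) x := by
  rw [eps_eq, eps_eq, eps_eq]
  rcases Int.even_or_odd m with hm | hm <;> rcases Int.even_or_odd n with hn | hn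
  · rw [if_pos hm, if_pos hn, if_pos (hm.add hn)]
  · rw [if_pos hm, if_neg (Int.not_even_iff_odd.mpr hn),
      if_neg (Int.not_even_iff_odd.mpr (hm.add_odd hn))]
  · rw [if_neg (Int.not_even_iff_odd.mpr hm), if_pos hn,
      if_neg (Int.not_even_iff_odd.mpr (hm.add_even hn))]
  · rw [if_neg (Int.not_even_iff_odd.mpr hm), if_neg (Int.not_even_iff_odd.mpr hn),
      if_pos (hm.add_odd hn), neg_neg]

lemma eps_invol (m : ℤ) (x : V) : eps m (eps m x) = x := by
  rw [eps_eps, eps_congr (n := 0) ⟨m, by ring⟩, eps_zero_s12]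

lemma eps_add_dist (m : ℤ) (x y : V) : eps m (x + y) = eps m x + eps m y := by
  simp [eps, smul_add]

lemma eps_sub_dist (m : ℤ) (x y : V) : eps m (x - y) = eps m x - eps m y := by
  simp [eps, smul_sub]

lemma eps_neg_arg (m : ℤ) (x : V) : eps m (-x) = -eps m x := by
  simp [eps]

lemma eps_zero_arg (m : ℤ) : eps m (0 : V) = 0 := by simp [eps]

lemma map_eps_s12 (F : V → W) (hF : ∀ a b, F (a + b) = F a + F b) (m : ℤ) (x : V) :
    F (eps m x) = eps m (F x) := by
  simp only [eps]
  exact map_zsmul (AddMonoidHom.mk' F hF) _ x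

lemma map_subF (F : V → W) (hF : ∀ a b, F (a + b) = F a + F b) (x y : V) :
    F (x - y) = F x - F y :=
  map_sub (AddMonoidHom.mk' F hF) x y

lemma map_zero' (F : V → W) (hF : ∀ a b, F (a + b) = F a + F b) :
    F 0 = 0 := map_zero (AddMonoidHom.mk' F hF)

end EpsLemmas

section DCDLemmas
variable {Hc Hh : Type*} [AddCommGroup Hc] [AddCommGroup Hh] (D : DCD Hc Hh)

lemma DCD.pd_inj {x y : Hc} (h : D.cap x D.vol = D.cap y D.vol) : x = y := by
  have h2 := congrArg D.PDinv h
  rwa [D.pd_left, D.pd_left] at h2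

lemma DCD.cap_eps (m : ℤ) (x : Hc) (α : Hh) :
    D.cap (eps m x) α = eps m (D.cap x α) :=
  map_eps_s12 (fun a => D.cap a α) (fun a b => D.cap_addl a b α) m x

lemma DCD.cap_eps' (m : ℤ) (x : Hc) (α : Hh) :
    D.cap x (eps m α) = eps m (D.cap x α) :=
  map_eps_s12 (D.cap x) (D.cap_addr x) m α

lemma DCD.cup_epsl (m : ℤ) (x y : Hc) :
    D.cup (eps m x) y = eps m (D.cup x y) :=
  map_eps_s12 (fun a => D.cup a y) (fun a b => D.cup_addl a b y) m x

lemma DCD.cup_epsr (m : ℤ) (x y : Hc) :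
    D.cup x (eps m y) = eps m (D.cup x y) :=
  map_eps_s12 (D.cup x) (D.cup_addr x) m y

lemma DCD.cup_negr (x y : Hc) : D.cup x (-y) = -(D.cup x y) :=
  map_neg (AddMonoidHom.mk' (D.cup x) (D.cup_addr x)) y

lemma DCD.cup_negl (x y : Hc) : D.cup (-x) y = -(D.cup x y) :=
  map_neg (AddMonoidHom.mk' (fun a => D.cup a y) (fun a b => D.cup_addl a b y)) x

lemma DCD.cap_subl (x y : Hc) (α : Hh) :
    D.cap (x - y) α = D.cap x α - D.cap y α :=
  map_subF (fun a => D.cap a α) (fun a b => D.cap_addl a b α) x y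

lemma DCD.cap_zeror (x : Hc) : D.cap x (0 : Hh) = 0 :=
  map_zero' (D.cap x) (D.cap_addr x)

lemma DCD.cap_zerol (α : Hh) : D.cap (0 : Hc) α = 0 :=
  map_zero' (fun a => D.cap a α) (fun a b => D.cap_addl a b α)

lemma DCD.delta_homog {p : ℤ} {f : Hc} (hf : D.homc p f) :
    D.homc (p - 1) (D.Δ f) := by
  have h1 := D.cap_homog p D.n f D.vol hf D.vol_homog
  have h2 := D.B_homog _ _ h1
  have h3 := D.PDinv_homog _ _ h2
  have he : D.n - (D.n - p + 1) = p - 1 := by ring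
  rwa [he] at h3

lemma DCD.cap_delta (f : Hc) :
    D.cap (D.Δ f) D.vol = D.B (D.cap f D.vol) := D.pd_right _

lemma DCD.bracket (p q : ℤ) (f g : Hc) (hf : D.homc p f) (hg : D.homc q g) :
    D.gb f g = eps (p + 1)
      (D.Δ (D.cup f g) - D.cup (D.Δ f) g - eps p (D.cup f (D.Δ g))) := by
  have hΔf := D.delta_homog hf
  have hC := D.compat p q f g D.vol hf hg
  rw [D.B_vol, D.cap_zeror, eps_zero_arg, sub_zero, ← D.cap_cup f g,
    ← D.cap_delta g, ← D.cap_cup f (D.Δ g), ← D.cap_delta f,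
    ← D.cap_cup g (D.Δ f), ← D.cap_delta (D.cup f g)] at hC
  have hcomm : D.cup g (D.Δ f) = eps (q * (p - 1)) (D.cup (D.Δ f) g) :=
    D.cup_comm q (p - 1) g (D.Δ f) hg hΔf
  rw [hcomm, D.cap_eps, eps_eps,
    eps_congr (m := q * (p + 1) + q * (p - 1)) (n := 0) ⟨q * p, by ring⟩,
    eps_zero_s12] at hC
  have hC2 := congrArg (eps (p + 1)) hC
  rw [eps_invol] at hC2
  apply D.pd_inj
  rw [D.cap_eps, D.cap_subl, D.cap_subl, D.cap_eps, hC2]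
  exact congrArg (eps (p + 1)) (by abel)

lemma DCD.delta_cup (p q : ℤ) (f g : Hc) (hf : D.homc p f) (hg : D.homc q g) :
    D.Δ (D.cup f g) = D.cup (D.Δ f) g + eps p (D.cup f (D.Δ g))
      + eps (p + 1) (D.gb f g) := by
  rw [D.bracket p q f g hf hg, eps_invol]
  abel

lemma DCD.gb_cupl (p q r : ℤ) (f g h : Hc)
    (hf : D.homc p f) (hg : D.homc q g) (hh : D.homc r h) :
    D.gb (D.cup f g) h = D.cup f (D.gb g h)
      + eps (q * (r + 1)) (D.cup (D.gb f h) g) := by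
  have h1 := D.gb_skew (p + q) r (D.cup f g) h (D.cup_homog p q f g hf hg) hh
  have h2 := D.gb_leibniz r p q h f g hh hf hg
  have h3 := D.gb_skew r p h f hh hf
  have h4 := D.gb_skew r q h g hh hg
  rw [h3, h4] at h2
  rw [h1, h2]
  simp only [D.cup_negl, D.cup_epsl, D.cup_negr, D.cup_epsr, eps_neg_arg,
    eps_add_dist, eps_eps, neg_add_rev, neg_neg]
  rw [eps_congr (m := (p + q + 1) * (r + 1) + ((r + 1) * p + (r + 1) * (q + 1)))
      (n := 0) ⟨(r + 1) * (p + q + 1), by ring⟩, eps_zero_s12,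
    eps_congr (m := (p + q + 1) * (r + 1) + (r + 1) * (p + 1)) (n := q * (r + 1))
      ⟨(r + 1) * (p + 1), by ring⟩]

end DCDLemmas

/-- Lambre's theorem: for a differential calculus with duality, `(H^•, ∪, Δ)` with
`Δ = PD⁻¹ ∘ B ∘ PD` is a Batalin-Vilkovisky algebra (Δ² = 0 and Δ is a second
order operator) whose induced bracket equals the Gerstenhaber bracket. -/
theorem lambre_BV {k Hc Hh : Type*} [Field k] [CharZero k]
    [AddCommGroup Hc] [AddCommGroup Hh] [Module k Hc] [Module k Hh]
    (D : DCD Hc Hh) :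
    (∀ f, D.Δ (D.Δ f) = 0) ∧
    (∀ p q r f g h, D.homc p f → D.homc q g → D.homc r h →
      D.Δ (D.cup (D.cup f g) h) =
        D.cup (D.Δ (D.cup f g)) h + eps p (D.cup f (D.Δ (D.cup g h)))
          + eps ((p - 1) * q) (D.cup g (D.Δ (D.cup f h)))
          - D.cup (D.cup (D.Δ f) g) h - eps p (D.cup f (D.cup (D.Δ g) h))
          - eps (p + q) (D.cup f (D.cup g (D.Δ h)))) ∧
    (∀ p q f g, D.homc p f → D.homc q g →
      D.gb f g = eps (p + 1)
        (D.Δ (D.cup f g) - D.cup (D.Δ f) g - eps p (D.cup f (D.Δ g)))) := by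
  refine ⟨?_, ?_, ?_⟩
  · -- Δ² = 0
    intro f
    have h1 : D.B (D.cap (D.Δ f) D.vol) = 0 := by
      rw [D.cap_delta, D.B_sq]
    show D.PDinv (D.B (D.cap (D.Δ f) D.vol)) = 0
    rw [h1, ← D.cap_zerol D.vol, D.pd_left]
  · -- Δ is a second-order operator
    intro p q r f g h hf hg hh
    have hΔf := D.delta_homog hf
    have hfg := D.cup_homog p q f g hf hg
    -- expand the left-hand side
    have lhs_eq : D.Δ (D.cup (D.cup f g) h)
        = D.cup (D.Δ (D.cup f g)) h + eps (p + q) (D.cup f (D.cup g (D.Δ h)))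
          + eps (p + q + 1) (D.cup f (D.gb g h))
          + eps (p + 1 + q * r) (D.cup (D.gb f h) g) := by
      rw [D.delta_cup (p + q) r (D.cup f g) h hfg hh, D.cup_assoc,
        D.gb_cupl p q r f g h hf hg hh, eps_add_dist, eps_eps,
        eps_congr (m := p + q + 1 + q * (r + 1)) (n := p + 1 + q * r) ⟨q, by ring⟩]
      abel
    -- expand  f ∪ Δ(g ∪ h)
    have T2 : eps p (D.cup f (D.Δ (D.cup g h)))
        = eps p (D.cup f (D.cup (D.Δ g) h))
          + eps (p + q) (D.cup f (D.cup g (D.Δ h)))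
          + eps (p + q + 1) (D.cup f (D.gb g h)) := by
      rw [D.delta_cup q r g h hg hh, D.cup_addr, D.cup_addr, D.cup_epsr,
        D.cup_epsr, eps_add_dist, eps_add_dist, eps_eps, eps_eps,
        eps_congr (m := p + (q + 1)) (n := p + q + 1) ⟨0, by ring⟩]
    -- expand  g ∪ Δ(f ∪ h)
    have T3 : eps ((p - 1) * q) (D.cup g (D.Δ (D.cup f h)))
        = D.cup (D.cup (D.Δ f) g) h
          + eps (p + q) (D.cup f (D.cup g (D.Δ h)))
          + eps (p + 1 + q * r) (D.cup (D.gb f h) g) := by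
      have A : D.cup g (D.cup (D.Δ f) h)
          = eps (q * (p - 1)) (D.cup (D.cup (D.Δ f) g) h) := by
        rw [← D.cup_assoc, D.cup_comm q (p - 1) g (D.Δ f) hg hΔf, D.cup_epsl]
      have B : D.cup g (D.cup f (D.Δ h))
          = eps (q * p) (D.cup f (D.cup g (D.Δ h))) := by
        rw [← D.cup_assoc, D.cup_comm q p g f hg hf, D.cup_epsl, D.cup_assoc]
      have C : D.cup g (D.gb f h)
          = eps (q * (p + r - 1)) (D.cup (D.gb f h) g) :=
        D.cup_comm q (p + r - 1) g (D.gb f h) hg (D.gb_homog p r f h hf hh)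
      rw [D.delta_cup p r f h hf hh, D.cup_addr, D.cup_addr, D.cup_epsr,
        D.cup_epsr, A, B, C, eps_add_dist, eps_add_dist, eps_eps, eps_eps,
        eps_eps, eps_eps, eps_eps,
        eps_congr (m := (p - 1) * q + q * (p - 1)) (n := 0) ⟨q * (p - 1), by ring⟩,
        eps_zero_s12,
        eps_congr (m := (p - 1) * q + p + q * p) (n := p + q) ⟨p * q - q, by ring⟩,
        eps_congr (m := (p - 1) * q + (p + 1) + q * (p + r - 1)) (n := p + 1 + q * r)
          ⟨p * q - q, by ring⟩]
    rw [lhs_eq, T2, T3]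
    abel
  · -- induced bracket = Gerstenhaber bracket
    intro p q f g hf hg
    exact D.bracket p q f g hf hg
end
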